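/- arXiv:1710.06727 — 5 statements merged into one kernel-verified Lean document; each statement's English description precedes it below -/
import Mathlib

section
/- (Double robustness of the SDR estimating equation.) Let $Y$ be integrable, $X$ a random vector, $T = f(X)$, and suppose $E[Y \mid X] = E[Y \mid T]$ a.s. Let $m^*$ be any bounded measurable function of $T$ (a possibly misspecified model for $E[Y\mid T]$), and let $\alpha$ be bounded measurable in $X$. If $E[\alpha(X) \mid T]$ is correctly specified, then $E[\{Y - m^*(T)\}\{\alpha(X) - E[\alpha(X)\mid T]\}] = 0$. -/
open MeasureTheory

/-- Double robustness of the SDR estimating equation: with a possibly misspecified outcome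
model `m*` (an arbitrary bounded measurable function of `T = f(X)`), but a correctly
specified model for `E[α(X)∣T]`, the estimating function still has mean zero whenever
`E[Y ∣ X] = E[Y ∣ T]` a.s. -/
theorem sdr_double_robust_outcome_misspecified
    {Ω γ δ : Type*} [MeasurableSpace Ω] [MeasurableSpace γ] [MeasurableSpace δ]
    (μ : Measure Ω) [IsProbabilityMeasure μ]
    (X : Ω → γ) (hX : Measurable X) (f : γ → δ) (hf : Measurable f)
    (Y : Ω → ℝ) (hY : Integrable Y μ)
    (hDR : μ[Y | MeasurableSpace.comap X inferInstance]
        =ᵐ[μ] μ[Y | MeasurableSpace.comap (fun ω => f (X ω)) inferInstance])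
    (mstar : δ → ℝ) (hmstar : Measurable mstar) (Cm : ℝ) (hmb : ∀ t, |mstar t| ≤ Cm)
    (α : γ → ℝ) (hα : Measurable α) (Cα : ℝ) (hαb : ∀ x, |α x| ≤ Cα) :
    ∫ ω, (Y ω - mstar (f (X ω)))
        * (α (X ω) - (μ[(fun ω => α (X ω)) |
            MeasurableSpace.comap (fun ω => f (X ω)) inferInstance]) ω) ∂μ = 0 := by
  rename_i m0 mγ mδ hprob
  set mT : MeasurableSpace Ω := MeasurableSpace.comap (fun ω => f (X ω)) inferInstance with hmT
  set mX : MeasurableSpace Ω := MeasurableSpace.comap X inferInstance with hmX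
  have hmT_le_mX : mT ≤ mX := by
    rw [hmT, hmX]
    intro s hs
    obtain ⟨t, ht, rfl⟩ := hs
    exact ⟨f ⁻¹' t, hf ht, rfl⟩
  have hmX_le : mX ≤ m0 := hX.comap_le
  have hmT_le : mT ≤ m0 := hmT_le_mX.trans hmX_le
  set A : Ω → ℝ := fun ω => α (X ω) with hA
  set g : Ω → ℝ := μ[A | mT] with hg
  set W : Ω → ℝ := fun ω => A ω - g ω with hW
  -- measurability facts
  have hXmX : Measurable[mX] X := fun s hs => ⟨s, hs, rfl⟩
  have hTmT : Measurable[mT] (fun ω => f (X ω)) := fun s hs => ⟨s, hs, rfl⟩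
  have hA_sm : StronglyMeasurable[mX] A := (hα.comp hXmX).stronglyMeasurable
  have hg_smT : StronglyMeasurable[mT] g := stronglyMeasurable_condExp
  have hW_sm : StronglyMeasurable[mX] W := hA_sm.sub (hg_smT.mono hmT_le_mX)
  have hmstar_sm : StronglyMeasurable[mT] (fun ω => mstar (f (X ω))) :=
    (hmstar.comp hTmT).stronglyMeasurable
  -- integrability / bounds
  have hAbd : ∀ᵐ ω ∂μ, ‖A ω‖ ≤ Cα := Filter.Eventually.of_forall fun ω => hαb (X ω)
  have hAint : Integrable A μ :=
    ⟨((hα.comp hX)).aestronglyMeasurable, HasFiniteIntegral.of_bounded hAbd⟩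
  have hgint : Integrable g μ := integrable_condExp
  have hWint : Integrable W μ := hAint.sub hgint
  have hgbd : ∀ᵐ ω ∂μ, |g ω| ≤ (Cα.toNNReal : ℝ) := by
    refine ae_bdd_condExp_of_ae_bdd ?_
    exact Filter.Eventually.of_forall fun ω => (hαb (X ω)).trans (Real.le_coe_toNNReal Cα)
  have hWbd : ∀ᵐ ω ∂μ, ‖W ω‖ ≤ Cα + Cα.toNNReal := by
    filter_upwards [hgbd] with ω hgω
    calc ‖W ω‖ = |A ω - g ω| := rfl
      _ ≤ |A ω| + |g ω| := abs_sub _ _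
      _ ≤ Cα + Cα.toNNReal := add_le_add (hαb (X ω)) hgω
  -- conditional expectation of W given mT is 0 a.e.
  have hcondW : μ[W | mT] =ᵐ[μ] 0 := by
    have h1 : μ[W | mT] =ᵐ[μ] μ[A | mT] - μ[g | mT] := condExp_sub hAint hgint mT
    have h2 : μ[g | mT] = g := condExp_of_stronglyMeasurable (μ := μ) hmT_le hg_smT hgint
    filter_upwards [h1] with ω hω
    simp [hω, h2, ← hg]
  -- product integrabilities
  have hWYint : Integrable (W * Y) μ :=
    hY.bdd_mul (hW_sm.mono hmX_le).aestronglyMeasurable hWbd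
  have hmWint : Integrable ((fun ω => mstar (f (X ω))) * W) μ :=
    hWint.bdd_mul ((hmstar_sm.mono hmT_le)).aestronglyMeasurable
      (Filter.Eventually.of_forall fun ω => hmb (f (X ω)))
  -- Part a : ∫ (mstar ∘ T) * W = 0
  have parta : ∫ ω, mstar (f (X ω)) * W ω ∂μ = 0 := by
    have hpull : μ[(fun ω => mstar (f (X ω))) * W | mT]
        =ᵐ[μ] (fun ω => mstar (f (X ω))) * μ[W | mT] :=
      condExp_mul_of_stronglyMeasurable_left hmstar_sm hmWint hWint
    have hzero : μ[(fun ω => mstar (f (X ω))) * W | mT] =ᵐ[μ] 0 := by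
      refine hpull.trans ?_
      filter_upwards [hcondW] with ω hω
      simp [hω]
    calc ∫ ω, mstar (f (X ω)) * W ω ∂μ
        = ∫ ω, (μ[(fun ω => mstar (f (X ω))) * W | mT]) ω ∂μ :=
          (integral_condExp hmT_le).symm
      _ = 0 := by
          rw [integral_congr_ae hzero]; simp
  -- Part b : ∫ Y * W = 0
  have partb : ∫ ω, Y ω * W ω ∂μ = 0 := by
    have hpull1 : μ[W * Y | mX] =ᵐ[μ] W * μ[Y | mX] :=
      condExp_mul_of_stronglyMeasurable_left hW_sm hWYint hY
    set h : Ω → ℝ := μ[Y | mT] with hh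
    have hhint : Integrable h μ := integrable_condExp
    have hhWint : Integrable (h * W) μ := by
      have : Integrable (W * h) μ :=
        hhint.bdd_mul (hW_sm.mono hmX_le).aestronglyMeasurable hWbd
      simpa [mul_comm] using this
    have hpull2 : μ[h * W | mT] =ᵐ[μ] h * μ[W | mT] :=
      condExp_mul_of_stronglyMeasurable_left stronglyMeasurable_condExp hhWint hWint
    have hzero2 : μ[h * W | mT] =ᵐ[μ] 0 := by
      refine hpull2.trans ?_
      filter_upwards [hcondW] with ω hω
      simp [hω]
    have step1 : ∫ ω, Y ω * W ω ∂μ = ∫ ω, W ω * (μ[Y | mX]) ω ∂μ := by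
      calc ∫ ω, Y ω * W ω ∂μ = ∫ ω, (W * Y) ω ∂μ := by
            simp [mul_comm]
        _ = ∫ ω, (μ[W * Y | mX]) ω ∂μ := (integral_condExp hmX_le).symm
        _ = ∫ ω, W ω * (μ[Y | mX]) ω ∂μ := integral_congr_ae hpull1
    have step2 : ∫ ω, W ω * (μ[Y | mX]) ω ∂μ = ∫ ω, (h * W) ω ∂μ := by
      refine integral_congr_ae ?_
      filter_upwards [hDR] with ω hω
      have hω' : (μ[Y|mX]) ω = h ω := hω
      simp only [Pi.mul_apply, hω']
      ring
    have step3 : ∫ ω, (h * W) ω ∂μ = 0 := by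
      calc ∫ ω, (h * W) ω ∂μ = ∫ ω, (μ[h * W | mT]) ω ∂μ := (integral_condExp hmT_le).symm
        _ = 0 := by rw [integral_congr_ae hzero2]; simp
    rw [step1, step2, step3]
  -- combine
  have hsub : ∀ ω, (Y ω - mstar (f (X ω))) * W ω
      = Y ω * W ω - mstar (f (X ω)) * W ω := fun ω => by ring
  calc ∫ ω, (Y ω - mstar (f (X ω))) * W ω ∂μ
      = ∫ ω, (Y ω * W ω - mstar (f (X ω)) * W ω) ∂μ := by simp_rw [hsub]
    _ = (∫ ω, Y ω * W ω ∂μ) - ∫ ω, mstar (f (X ω)) * W ω ∂μ := by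
        refine integral_sub ?_ ?_
        · exact hWYint.congr (Filter.Eventually.of_forall fun ω => mul_comm _ _)
        · exact hmWint
    _ = 0 := by rw [parta, partb]; ring
end

section
/- (Consistency of the IPW-SDR estimating equation, Corollary 3 of the paper.) Let $(Y,A,C)$ have density $p(y\mid a,c)p(a\mid c)p(c)$ with $p(a\mid c)>0$, let $g^*$ be a density in $a$, and let $q(y,a,c) = p(y\mid a,c)g^*(a)p(c)$. Suppose $E_q[Y\mid A] = E_q[Y\mid A^T\beta]$ $q$-a.s. (the true dimension reduction holds under $q$). Then with $U(\beta) = \{Y - E_q[Y\mid A^T\beta]\}\{\alpha(A) - E_q[\alpha(A)\mid A^T\beta]\}$ for bounded measurable $\alpha$, we have $E_p\left[\frac{g^*(A)}{p(A\mid C)}\,U(\beta)\right] = 0$. -/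
open MeasureTheory
open scoped NNReal ENNReal

/-- Consistency of the IPW-SDR estimating equation (Corollary 3): with observed density
`p(y∣a,c) p(a∣c) p(c)` (measure `P`), reweighted density `q(y,a,c) = p(y∣a,c) g*(a) p(c)`
(measure `Q`), if `E_q[Y∣A] = E_q[Y∣Aᵀβ]` `q`-a.s., then with
`U(β) = {Y - E_q[Y∣Aᵀβ]}{α(A) - E_q[α(A)∣Aᵀβ]}`, `E_P[(g*(A)/p(A∣C)) U(β)] = 0`. -/
theorem ipw_sdr_estimating_equation_consistency
    {𝒞 : Type*} [MeasurableSpace 𝒞] {n p : ℕ}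
    (νY : Measure ℝ) (νA : Measure (Fin n → ℝ)) (νC : Measure 𝒞)
    [SigmaFinite νY] [SigmaFinite νA] [SigmaFinite νC]
    (pY : ℝ → (Fin n → ℝ) → 𝒞 → ℝ) (pA : (Fin n → ℝ) → 𝒞 → ℝ) (pC : 𝒞 → ℝ)
    (gs : (Fin n → ℝ) → ℝ)
    (hpY : Measurable (fun z : ℝ × (Fin n → ℝ) × 𝒞 => pY z.1 z.2.1 z.2.2))
    (hpYnn : ∀ y a c, 0 ≤ pY y a c)
    (hpA : Measurable (Function.uncurry pA)) (hpApos : ∀ a c, 0 < pA a c)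
    (hpC : Measurable pC) (hpCnn : ∀ c, 0 ≤ pC c)
    (hgs : Measurable gs) (hgsnn : ∀ a, 0 ≤ gs a) (hgs1 : ∫ a, gs a ∂νA = 1)
    (P Q : Measure (ℝ × (Fin n → ℝ) × 𝒞))
    [IsProbabilityMeasure P] [IsProbabilityMeasure Q]
    (hPdef : P = (νY.prod (νA.prod νC)).withDensity
        (fun z => ENNReal.ofReal (pY z.1 z.2.1 z.2.2 * pA z.2.1 z.2.2 * pC z.2.2)))
    (hQdef : Q = (νY.prod (νA.prod νC)).withDensity
        (fun z => ENNReal.ofReal (pY z.1 z.2.1 z.2.2 * gs z.2.1 * pC z.2.2)))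
    (β : Matrix (Fin n) (Fin p) ℝ)
    (hYint : Integrable (fun z : ℝ × (Fin n → ℝ) × 𝒞 => z.1) Q)
    -- the true dimension reduction holds under `q`: `E_q[Y∣A] = E_q[Y∣Aᵀβ]` a.s.
    (hDR : Q[(fun z : ℝ × (Fin n → ℝ) × 𝒞 => z.1) |
          MeasurableSpace.comap (fun z : ℝ × (Fin n → ℝ) × 𝒞 => z.2.1) inferInstance]
        =ᵐ[Q] Q[(fun z : ℝ × (Fin n → ℝ) × 𝒞 => z.1) |
          MeasurableSpace.comap
            (fun z : ℝ × (Fin n → ℝ) × 𝒞 => Matrix.vecMul z.2.1 β) inferInstance])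
    -- `mY` is a version of `E_q[Y∣Aᵀβ]` as a function of `Aᵀβ`
    (mY : (Fin p → ℝ) → ℝ) (hmY : Measurable mY)
    (hmYver : Q[(fun z : ℝ × (Fin n → ℝ) × 𝒞 => z.1) |
          MeasurableSpace.comap
            (fun z : ℝ × (Fin n → ℝ) × 𝒞 => Matrix.vecMul z.2.1 β) inferInstance]
        =ᵐ[Q] fun z => mY (Matrix.vecMul z.2.1 β))
    (α : (Fin n → ℝ) → ℝ) (hα : Measurable α) (Cα : ℝ) (hαb : ∀ a, |α a| ≤ Cα)
    -- `mα` is a version of `E_q[α(A)∣Aᵀβ]` as a function of `Aᵀβ`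
    (mα : (Fin p → ℝ) → ℝ) (hmα : Measurable mα)
    (hmαver : Q[(fun z : ℝ × (Fin n → ℝ) × 𝒞 => α z.2.1) |
          MeasurableSpace.comap
            (fun z : ℝ × (Fin n → ℝ) × 𝒞 => Matrix.vecMul z.2.1 β) inferInstance]
        =ᵐ[Q] fun z => mα (Matrix.vecMul z.2.1 β))
    (hIntP : Integrable (fun z : ℝ × (Fin n → ℝ) × 𝒞 =>
        gs z.2.1 / pA z.2.1 z.2.2
          * ((z.1 - mY (Matrix.vecMul z.2.1 β))
              * (α z.2.1 - mα (Matrix.vecMul z.2.1 β)))) P) :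
    ∫ z : ℝ × (Fin n → ℝ) × 𝒞,
        gs z.2.1 / pA z.2.1 z.2.2
          * ((z.1 - mY (Matrix.vecMul z.2.1 β))
              * (α z.2.1 - mα (Matrix.vecMul z.2.1 β))) ∂P = 0 := by
  classical
  set μ : Measure (ℝ × (Fin n → ℝ) × 𝒞) := νY.prod (νA.prod νC) with hμ
  -- notation
  set U : ℝ × (Fin n → ℝ) × 𝒞 → ℝ := fun z =>
    (z.1 - mY (Matrix.vecMul z.2.1 β)) * (α z.2.1 - mα (Matrix.vecMul z.2.1 β)) with hU
  set F : ℝ × (Fin n → ℝ) × 𝒞 → ℝ := fun z => gs z.2.1 / pA z.2.1 z.2.2 * U z with hF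
  -- densities as ℝ≥0 valued
  set dP : ℝ × (Fin n → ℝ) × 𝒞 → ℝ≥0 := fun z =>
    Real.toNNReal (pY z.1 z.2.1 z.2.2 * pA z.2.1 z.2.2 * pC z.2.2) with hdP
  set dQ : ℝ × (Fin n → ℝ) × 𝒞 → ℝ≥0 := fun z =>
    Real.toNNReal (pY z.1 z.2.1 z.2.2 * gs z.2.1 * pC z.2.2) with hdQ
  have hmeasproj : Measurable (fun z : ℝ × (Fin n → ℝ) × 𝒞 => z.2.1) :=
    measurable_fst.comp measurable_snd
  have hpA' : Measurable (fun z : ℝ × (Fin n → ℝ) × 𝒞 => pA z.2.1 z.2.2) :=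
    hpA.comp (hmeasproj.prodMk (measurable_snd.comp measurable_snd))
  have hdPm : Measurable dP :=
    ((hpY.mul hpA').mul (hpC.comp (measurable_snd.comp measurable_snd))).real_toNNReal
  have hdQm : Measurable dQ :=
    ((hpY.mul (hgs.comp hmeasproj)).mul
      (hpC.comp (measurable_snd.comp measurable_snd))).real_toNNReal
  have hPd : P = μ.withDensity (fun z => (dP z : ℝ≥0∞)) := by rw [hPdef]; rfl
  have hQd : Q = μ.withDensity (fun z => (dQ z : ℝ≥0∞)) := by rw [hQdef]; rfl
  -- pointwise identity of weighted integrands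
  have hptw : ∀ z, dP z • F z = dQ z • U z := by
    intro z
    have h1 : 0 ≤ pY z.1 z.2.1 z.2.2 * pA z.2.1 z.2.2 * pC z.2.2 :=
      mul_nonneg (mul_nonneg (hpYnn _ _ _) (hpApos _ _).le) (hpCnn _)
    have h2 : 0 ≤ pY z.1 z.2.1 z.2.2 * gs z.2.1 * pC z.2.2 :=
      mul_nonneg (mul_nonneg (hpYnn _ _ _) (hgsnn _)) (hpCnn _)
    simp only [hdP, hdQ, hF, NNReal.smul_def, Real.coe_toNNReal _ h1, Real.coe_toNNReal _ h2,
      smul_eq_mul]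
    have hpAne : pA z.2.1 z.2.2 ≠ 0 := (hpApos _ _).ne'
    field_simp
  -- change of measure for integrals
  have hint_eq : ∫ z, F z ∂P = ∫ z, U z ∂Q := by
    rw [hPd, hQd, integral_withDensity_eq_integral_smul hdPm,
      integral_withDensity_eq_integral_smul hdQm]
    exact integral_congr_ae (Filter.Eventually.of_forall hptw)
  -- integrability of U under Q
  have hUintQ : Integrable U Q := by
    rw [hQd, integrable_withDensity_iff_integrable_smul hdQm]
    have : Integrable (fun z => dP z • F z) μ := by
      rw [← integrable_withDensity_iff_integrable_smul hdPm, ← hPd]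
      exact hIntP
    exact this.congr (Filter.Eventually.of_forall hptw)
  -- the σ-algebra generated by A
  have hmA_le : MeasurableSpace.comap (fun z : ℝ × (Fin n → ℝ) × 𝒞 => z.2.1) inferInstance
      ≤ (inferInstance : MeasurableSpace (ℝ × (Fin n → ℝ) × 𝒞)) := hmeasproj.comap_le
  have hmeasA : @Measurable _ _
      (MeasurableSpace.comap (fun z : ℝ × (Fin n → ℝ) × 𝒞 => z.2.1) inferInstance) _
      (fun z : ℝ × (Fin n → ℝ) × 𝒞 => z.2.1) :=
    Measurable.of_comap_le le_rfl
  have hvecMul : Measurable (fun v : Fin n → ℝ => Matrix.vecMul v β) := by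
    refine measurable_pi_lambda _ fun j => ?_
    simp only [Matrix.vecMul, dotProduct]
    exact Finset.measurable_sum _ fun i _ => (measurable_pi_apply i).mul measurable_const
  have hmYcomp : Measurable (fun z : ℝ × (Fin n → ℝ) × 𝒞 => mY (Matrix.vecMul z.2.1 β)) :=
    (hmY.comp hvecMul).comp hmeasproj
  -- integrability of mY ∘ (Aβ) under Q
  have hmYint : Integrable (fun z : ℝ × (Fin n → ℝ) × 𝒞 => mY (Matrix.vecMul z.2.1 β)) Q :=
    integrable_condExp.congr hmYver
  -- g := Y - mY(Aβ); its conditional expectation given A is 0 a.e.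
  set g : ℝ × (Fin n → ℝ) × 𝒞 → ℝ := fun z => z.1 - mY (Matrix.vecMul z.2.1 β) with hg
  have hgint : Integrable g Q := hYint.sub hmYint
  have hgce : Q[g | MeasurableSpace.comap (fun z : ℝ × (Fin n → ℝ) × 𝒞 => z.2.1) inferInstance]
      =ᵐ[Q] 0 := by
    have h1 : Q[g | MeasurableSpace.comap (fun z : ℝ × (Fin n → ℝ) × 𝒞 => z.2.1) inferInstance]
        =ᵐ[Q] Q[(fun z : ℝ × (Fin n → ℝ) × 𝒞 => z.1) |
            MeasurableSpace.comap (fun z : ℝ × (Fin n → ℝ) × 𝒞 => z.2.1) inferInstance]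
          - Q[(fun z : ℝ × (Fin n → ℝ) × 𝒞 => mY (Matrix.vecMul z.2.1 β)) |
            MeasurableSpace.comap (fun z : ℝ × (Fin n → ℝ) × 𝒞 => z.2.1) inferInstance] :=
      condExp_sub hYint hmYint _
    have h2 : Q[(fun z : ℝ × (Fin n → ℝ) × 𝒞 => mY (Matrix.vecMul z.2.1 β)) |
          MeasurableSpace.comap (fun z : ℝ × (Fin n → ℝ) × 𝒞 => z.2.1) inferInstance]
        =ᵐ[Q] fun z => mY (Matrix.vecMul z.2.1 β) := by
      refine Filter.EventuallyEq.of_eq (condExp_of_stronglyMeasurable hmA_le ?_ hmYint)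
      exact (((hmY.comp hvecMul).comp hmeasA).stronglyMeasurable)
    have h3 : Q[(fun z : ℝ × (Fin n → ℝ) × 𝒞 => z.1) |
          MeasurableSpace.comap (fun z : ℝ × (Fin n → ℝ) × 𝒞 => z.2.1) inferInstance]
        =ᵐ[Q] fun z => mY (Matrix.vecMul z.2.1 β) := hDR.trans hmYver
    filter_upwards [h1, h2, h3] with z hz1 hz2 hz3
    simp only [Pi.sub_apply, Pi.zero_apply] at hz1 ⊢
    rw [hz1, hz2, hz3, sub_self]
  -- f := α(A) - mα(Aβ) is mA-strongly measurable
  set f : ℝ × (Fin n → ℝ) × 𝒞 → ℝ := fun z => α z.2.1 - mα (Matrix.vecMul z.2.1 β) with hf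
  have hfm : @StronglyMeasurable _ _ _
      (MeasurableSpace.comap (fun z : ℝ × (Fin n → ℝ) × 𝒞 => z.2.1) inferInstance) f := by
    refine Measurable.stronglyMeasurable ?_
    exact ((hα.comp hmeasA).sub ((hmα.comp hvecMul).comp hmeasA))
  have hfg_int : Integrable (f * g) Q := by
    refine hUintQ.congr (Filter.Eventually.of_forall fun z => ?_)
    simp [hU, hf, hg, mul_comm]
  -- pull-out property
  have hUce : Q[f * g | MeasurableSpace.comap
        (fun z : ℝ × (Fin n → ℝ) × 𝒞 => z.2.1) inferInstance] =ᵐ[Q] 0 := by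
    have := condExp_mul_of_stronglyMeasurable_left hfm hfg_int hgint
    refine this.trans ?_
    filter_upwards [hgce] with z hz
    simp [Pi.mul_apply, hz]
  -- conclude
  have hintU : ∫ z, U z ∂Q = 0 := by
    have h1 : ∫ z, U z ∂Q = ∫ z, (f * g) z ∂Q :=
      integral_congr_ae (Filter.Eventually.of_forall fun z => by simp [hU, hf, hg, mul_comm])
    have hic := integral_condExp (μ := Q) (f := f * g) hmA_le
    rw [h1, ← hic]
    exact integral_eq_zero_of_ae hUce
  rw [hint_eq, hintU]
end

section
/- (Robustness to misspecified outcome model under correct $\alpha$-model, part of Proposition 5.) In the setting of the IPW-SDR estimating equation, suppose $E_q[Y\mid A] = E_q[Y\mid A^T\beta]$ $q$-a.s., let $m^*$ be any bounded measurable function of $A^T\beta$, and let $U^*(\beta) = \{Y - m^*(A^T\beta)\}\{\alpha(A) - E_q[\alpha(A)\mid A^T\beta]\}$ with bounded measurable $\alpha$. Then $E_p\left[\frac{g^*(A)}{p(A\mid C)}\,U^*(\beta)\right] = 0$. -/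
open MeasureTheory
open scoped ENNReal NNReal

/-- Robustness of the IPW-SDR estimating equation to a misspecified outcome model (part of
Proposition 5): if `E_q[Y∣A] = E_q[Y∣Aᵀβ]` `q`-a.s. and the model `E_q[α(A)∣Aᵀβ]` is correct,
then for an arbitrary bounded measurable `m*` of `Aᵀβ`, with
`U*(β) = {Y - m*(Aᵀβ)}{α(A) - E_q[α(A)∣Aᵀβ]}`, `E_P[(g*(A)/p(A∣C)) U*(β)] = 0`. -/
theorem ipw_sdr_robust_to_misspecified_outcome_model
    {𝒞 : Type*} [MeasurableSpace 𝒞] {n p : ℕ}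
    (νY : Measure ℝ) (νA : Measure (Fin n → ℝ)) (νC : Measure 𝒞)
    [SigmaFinite νY] [SigmaFinite νA] [SigmaFinite νC]
    (pY : ℝ → (Fin n → ℝ) → 𝒞 → ℝ) (pA : (Fin n → ℝ) → 𝒞 → ℝ) (pC : 𝒞 → ℝ)
    (gs : (Fin n → ℝ) → ℝ)
    (hpY : Measurable (fun z : ℝ × (Fin n → ℝ) × 𝒞 => pY z.1 z.2.1 z.2.2))
    (hpYnn : ∀ y a c, 0 ≤ pY y a c)
    (hpA : Measurable (Function.uncurry pA)) (hpApos : ∀ a c, 0 < pA a c)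
    (hpC : Measurable pC) (hpCnn : ∀ c, 0 ≤ pC c)
    (hgs : Measurable gs) (hgsnn : ∀ a, 0 ≤ gs a) (hgs1 : ∫ a, gs a ∂νA = 1)
    (P Q : Measure (ℝ × (Fin n → ℝ) × 𝒞))
    [IsProbabilityMeasure P] [IsProbabilityMeasure Q]
    (hPdef : P = (νY.prod (νA.prod νC)).withDensity
        (fun z => ENNReal.ofReal (pY z.1 z.2.1 z.2.2 * pA z.2.1 z.2.2 * pC z.2.2)))
    (hQdef : Q = (νY.prod (νA.prod νC)).withDensity
        (fun z => ENNReal.ofReal (pY z.1 z.2.1 z.2.2 * gs z.2.1 * pC z.2.2)))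
    (β : Matrix (Fin n) (Fin p) ℝ)
    (hYint : Integrable (fun z : ℝ × (Fin n → ℝ) × 𝒞 => z.1) Q)
    -- the true dimension reduction holds under `q`: `E_q[Y∣A] = E_q[Y∣Aᵀβ]` a.s.
    (hDR : Q[(fun z : ℝ × (Fin n → ℝ) × 𝒞 => z.1) |
          MeasurableSpace.comap (fun z : ℝ × (Fin n → ℝ) × 𝒞 => z.2.1) inferInstance]
        =ᵐ[Q] Q[(fun z : ℝ × (Fin n → ℝ) × 𝒞 => z.1) |
          MeasurableSpace.comap
            (fun z : ℝ × (Fin n → ℝ) × 𝒞 => Matrix.vecMul z.2.1 β) inferInstance])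
    -- `mstar` is an arbitrary, possibly misspecified, bounded measurable function of `Aᵀβ`
    (mstar : (Fin p → ℝ) → ℝ) (hmstar : Measurable mstar)
    (Cm : ℝ) (hmb : ∀ t, |mstar t| ≤ Cm)
    (α : (Fin n → ℝ) → ℝ) (hα : Measurable α) (Cα : ℝ) (hαb : ∀ a, |α a| ≤ Cα)
    -- `mα` is a version of `E_q[α(A)∣Aᵀβ]` as a function of `Aᵀβ`
    (mα : (Fin p → ℝ) → ℝ) (hmα : Measurable mα)
    (hmαver : Q[(fun z : ℝ × (Fin n → ℝ) × 𝒞 => α z.2.1) |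
          MeasurableSpace.comap
            (fun z : ℝ × (Fin n → ℝ) × 𝒞 => Matrix.vecMul z.2.1 β) inferInstance]
        =ᵐ[Q] fun z => mα (Matrix.vecMul z.2.1 β))
    (hIntP : Integrable (fun z : ℝ × (Fin n → ℝ) × 𝒞 =>
        gs z.2.1 / pA z.2.1 z.2.2
          * ((z.1 - mstar (Matrix.vecMul z.2.1 β))
              * (α z.2.1 - mα (Matrix.vecMul z.2.1 β)))) P) :
    ∫ z : ℝ × (Fin n → ℝ) × 𝒞,
        gs z.2.1 / pA z.2.1 z.2.2
          * ((z.1 - mstar (Matrix.vecMul z.2.1 β))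
              * (α z.2.1 - mα (Matrix.vecMul z.2.1 β))) ∂P = 0 := by
  classical
  set μ := νY.prod (νA.prod νC) with hμ
  -- notation
  set F : ℝ × (Fin n → ℝ) × 𝒞 → ℝ := fun z =>
    (z.1 - mstar (Matrix.vecMul z.2.1 β)) * (α z.2.1 - mα (Matrix.vecMul z.2.1 β)) with hF
  -- measurability helpers
  have hproj : Measurable (fun z : ℝ × (Fin n → ℝ) × 𝒞 => z.2.1) :=
    measurable_snd.fst
  have hvm : Measurable (fun v : Fin n → ℝ => Matrix.vecMul v β) := by
    unfold Matrix.vecMul dotProduct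
    exact measurable_pi_lambda _ fun j =>
      Finset.measurable_sum _ fun i _ => (measurable_pi_apply i).mul_const _
  have hαm : Measurable (fun z : ℝ × (Fin n → ℝ) × 𝒞 => α z.2.1) := hα.comp hproj
  have hmαm : Measurable (fun z : ℝ × (Fin n → ℝ) × 𝒞 => mα (Matrix.vecMul z.2.1 β)) :=
    hmα.comp (hvm.comp hproj)
  -- Step 1: change of measure, ∫ (gs/pA) F dP = ∫ F dQ
  have hdPmeas : Measurable (fun z : ℝ × (Fin n → ℝ) × 𝒞 =>
      (pY z.1 z.2.1 z.2.2 * pA z.2.1 z.2.2 * pC z.2.2).toNNReal) := by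
    refine Measurable.real_toNNReal ?_
    exact (hpY.mul ((hpA.comp (hproj.prodMk (measurable_snd.snd))))).mul
      (hpC.comp measurable_snd.snd)
  have hdQmeas : Measurable (fun z : ℝ × (Fin n → ℝ) × 𝒞 =>
      (pY z.1 z.2.1 z.2.2 * gs z.2.1 * pC z.2.2).toNNReal) := by
    refine Measurable.real_toNNReal ?_
    exact (hpY.mul (hgs.comp hproj)).mul (hpC.comp measurable_snd.snd)
  have step1 : ∫ z, gs z.2.1 / pA z.2.1 z.2.2 * F z ∂P = ∫ z, F z ∂Q := by
    have hP' : P = μ.withDensity (fun z =>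
        ((pY z.1 z.2.1 z.2.2 * pA z.2.1 z.2.2 * pC z.2.2).toNNReal : ℝ≥0∞)) := hPdef
    have hQ' : Q = μ.withDensity (fun z =>
        ((pY z.1 z.2.1 z.2.2 * gs z.2.1 * pC z.2.2).toNNReal : ℝ≥0∞)) := hQdef
    rw [hP', hQ', integral_withDensity_eq_integral_smul hdPmeas,
      integral_withDensity_eq_integral_smul hdQmeas]
    refine integral_congr_ae (Filter.Eventually.of_forall fun z => ?_)
    have h1 : 0 ≤ pY z.1 z.2.1 z.2.2 * pA z.2.1 z.2.2 * pC z.2.2 :=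
      mul_nonneg (mul_nonneg (hpYnn _ _ _) (hpApos _ _).le) (hpCnn _)
    have h2 : 0 ≤ pY z.1 z.2.1 z.2.2 * gs z.2.1 * pC z.2.2 :=
      mul_nonneg (mul_nonneg (hpYnn _ _ _) (hgsnn _)) (hpCnn _)
    have hpAne : pA z.2.1 z.2.2 ≠ 0 := (hpApos _ _).ne'
    simp only [NNReal.smul_def, smul_eq_mul, Real.coe_toNNReal _ h1, Real.coe_toNNReal _ h2]
    field_simp
  rw [step1]
  -- Step 2: ∫ F dQ = 0 via conditioning
  set m1 : MeasurableSpace (ℝ × (Fin n → ℝ) × 𝒞) :=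
    MeasurableSpace.comap (fun z : ℝ × (Fin n → ℝ) × 𝒞 => z.2.1) inferInstance with hm1def
  set m2 : MeasurableSpace (ℝ × (Fin n → ℝ) × 𝒞) :=
    MeasurableSpace.comap (fun z : ℝ × (Fin n → ℝ) × 𝒞 => Matrix.vecMul z.2.1 β)
      inferInstance with hm2def
  have hm1 : m1 ≤ (Prod.instMeasurableSpace : MeasurableSpace (ℝ × (Fin n → ℝ) × 𝒞)) :=
    hproj.comap_le
  have hm21 : m2 ≤ m1 := by
    have hcomp : (fun z : ℝ × (Fin n → ℝ) × 𝒞 => Matrix.vecMul z.2.1 β)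
        = (fun v => Matrix.vecMul v β) ∘ (fun z : ℝ × (Fin n → ℝ) × 𝒞 => z.2.1) := rfl
    rw [hm2def, hm1def, hcomp, ← MeasurableSpace.comap_comp]
    exact MeasurableSpace.comap_mono hvm.comap_le
  have hm2 : m2 ≤ (Prod.instMeasurableSpace : MeasurableSpace (ℝ × (Fin n → ℝ) × 𝒞)) :=
    hm21.trans hm1
  haveI : SigmaFinite (Q.trim hm1) := by
    haveI := isFiniteMeasure_trim (μ := Q) hm1; infer_instance
  haveI : SigmaFinite (Q.trim hm2) := by
    haveI := isFiniteMeasure_trim (μ := Q) hm2; infer_instance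
  -- measurability wrt sub σ-algebras
  have hprojm1 : Measurable[m1] (fun z : ℝ × (Fin n → ℝ) × 𝒞 => z.2.1) :=
    Measurable.of_comap_le le_rfl
  have hvmm2 : Measurable[m2] (fun z : ℝ × (Fin n → ℝ) × 𝒞 => Matrix.vecMul z.2.1 β) :=
    Measurable.of_comap_le le_rfl
  set W : ℝ × (Fin n → ℝ) × 𝒞 → ℝ := fun z =>
    α z.2.1 - mα (Matrix.vecMul z.2.1 β) with hW
  set M : ℝ × (Fin n → ℝ) × 𝒞 → ℝ := fun z => mstar (Matrix.vecMul z.2.1 β) with hM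
  have hWm1 : StronglyMeasurable[m1] W :=
    ((hα.comp hprojm1).sub ((hmα.comp hvm).comp hprojm1)).stronglyMeasurable
  have hMm2 : StronglyMeasurable[m2] M := (hmstar.comp hvmm2).stronglyMeasurable
  have hMm1 : StronglyMeasurable[m1] M := hMm2.mono hm21
  -- a.e. bound on mα∘
  have hCα0 : (0:ℝ) ≤ Cα := le_trans (abs_nonneg _) (hαb default)
  have hαbd : ∀ᵐ z ∂Q, |α z.2.1| ≤ ((⟨Cα, hCα0⟩ : NNReal) : ℝ) :=
    Filter.Eventually.of_forall fun z => hαb _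
  have hmαbd : ∀ᵐ z ∂Q, |mα (Matrix.vecMul z.2.1 β)| ≤ Cα := by
    filter_upwards [hmαver, ae_bdd_condExp_of_ae_bdd (m := m2) hαbd] with z h1 h2
    rw [← h1]; exact h2
  have hWbd : ∀ᵐ z ∂Q, ‖W z‖ ≤ Cα + Cα := by
    filter_upwards [hmαbd] with z hz
    calc ‖W z‖ ≤ |α z.2.1| + |mα (Matrix.vecMul z.2.1 β)| := abs_sub _ _
    _ ≤ Cα + Cα := add_le_add (hαb _) hz
  -- integrabilities
  have hMint : Integrable M Q := by
    refine Integrable.mono' (integrable_const Cm) ((hMm2.mono hm2).aestronglyMeasurable)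
      (Filter.Eventually.of_forall fun z => hmb _)
  have hYMint : Integrable (fun z : ℝ × (Fin n → ℝ) × 𝒞 => z.1 - M z) Q := hYint.sub hMint
  have hWYMint : Integrable (fun z => W z * (z.1 - M z)) Q :=
    Integrable.bdd_mul hYMint
      ((hWm1.mono hm1).aestronglyMeasurable) hWbd
  -- F = W * (Y - M)
  have hFW : F = fun z => W z * (z.1 - M z) := by
    funext z; simp only [hF, hW, hM]; ring
  -- condexp of F given m1
  have hc1 : Q[F | m1] =ᵐ[Q] fun z =>
      W z * ((Q[(fun z : ℝ × (Fin n → ℝ) × 𝒞 => z.1) | m1]) z - M z) := by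
    rw [hFW]
    have h1 : Q[(fun z => W z * (z.1 - M z)) | m1]
        =ᵐ[Q] W * Q[(fun z : ℝ × (Fin n → ℝ) × 𝒞 => z.1 - M z) | m1] :=
      condExp_mul_of_stronglyMeasurable_left hWm1 hWYMint hYMint
    have h2 : Q[(fun z : ℝ × (Fin n → ℝ) × 𝒞 => z.1 - M z) | m1]
        =ᵐ[Q] Q[(fun z : ℝ × (Fin n → ℝ) × 𝒞 => z.1) | m1] - Q[M | m1] :=
      condExp_sub hYint hMint m1
    have h3 : Q[M | m1] = M := condExp_of_stronglyMeasurable hm1 hMm1 hMint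
    refine h1.trans ?_
    filter_upwards [h2] with z hz
    simp only [Pi.mul_apply, hz, Pi.sub_apply, h3]
  -- use hDR and pass to m2
  set Y2 : ℝ × (Fin n → ℝ) × 𝒞 → ℝ := Q[(fun z : ℝ × (Fin n → ℝ) × 𝒞 => z.1) | m2] with hY2
  have hG : Q[F | m1] =ᵐ[Q] fun z => W z * (Y2 z - M z) := by
    refine hc1.trans ?_
    filter_upwards [hDR] with z hz
    rw [hz]
  have hY2int : Integrable Y2 Q := integrable_condExp
  have hY2Mint : Integrable (fun z => Y2 z - M z) Q := hY2int.sub hMint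
  have hGint : Integrable (fun z => W z * (Y2 z - M z)) Q :=
    Integrable.bdd_mul hY2Mint ((hWm1.mono hm1).aestronglyMeasurable) hWbd
  -- second conditioning: given m2
  have hY2Mm2 : StronglyMeasurable[m2] (fun z => Y2 z - M z) :=
    stronglyMeasurable_condExp.sub hMm2
  have hWint : Integrable W Q := by
    refine Integrable.mono' (integrable_const (Cα + Cα))
      ((hWm1.mono hm1).aestronglyMeasurable) hWbd
  have hGmul : (fun z => W z * (Y2 z - M z)) = fun z => (Y2 z - M z) * W z := by
    funext z; ring
  have hc2 : Q[(fun z => (Y2 z - M z) * W z) | m2]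
      =ᵐ[Q] (fun z => Y2 z - M z) * Q[W | m2] :=
    condExp_mul_of_stronglyMeasurable_left hY2Mm2 (hGint.congr (Filter.Eventually.of_forall fun z => mul_comm _ _)) hWint
  -- Q[W | m2] = 0 a.e.
  have hmαint : Integrable (fun z : ℝ × (Fin n → ℝ) × 𝒞 => mα (Matrix.vecMul z.2.1 β)) Q :=
    (integrable_condExp (m := m2)
      (f := fun z : ℝ × (Fin n → ℝ) × 𝒞 => α z.2.1)).congr hmαver
  have hαint : Integrable (fun z : ℝ × (Fin n → ℝ) × 𝒞 => α z.2.1) Q := by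
    refine Integrable.mono' (integrable_const Cα) hαm.aestronglyMeasurable
      (Filter.Eventually.of_forall fun z => hαb _)
  have hWzero : Q[W | m2] =ᵐ[Q] 0 := by
    have h4 : Q[W | m2] =ᵐ[Q] Q[(fun z : ℝ × (Fin n → ℝ) × 𝒞 => α z.2.1) | m2]
        - Q[(fun z : ℝ × (Fin n → ℝ) × 𝒞 => mα (Matrix.vecMul z.2.1 β)) | m2] :=
      condExp_sub hαint hmαint m2
    have h5 : Q[(fun z : ℝ × (Fin n → ℝ) × 𝒞 => mα (Matrix.vecMul z.2.1 β)) | m2]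
        = fun z => mα (Matrix.vecMul z.2.1 β) :=
      condExp_of_stronglyMeasurable hm2 ((hmα.comp hvmm2).stronglyMeasurable) hmαint
    refine h4.trans ?_
    filter_upwards [hmαver] with z hz
    simp only [Pi.sub_apply, h5, hz, Pi.zero_apply, sub_self]
  -- put it together
  calc ∫ z, F z ∂Q = ∫ z, (Q[F | m1]) z ∂Q := (integral_condExp hm1).symm
    _ = ∫ z, W z * (Y2 z - M z) ∂Q := integral_congr_ae hG
    _ = ∫ z, (Y2 z - M z) * W z ∂Q := by rw [hGmul]
    _ = ∫ z, (Q[(fun z => (Y2 z - M z) * W z) | m2]) z ∂Q := (integral_condExp hm2).symm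
    _ = ∫ z, ((fun z => Y2 z - M z) * Q[W | m2]) z ∂Q := integral_congr_ae hc2
    _ = 0 := by
      rw [show (0:ℝ) = ∫ _ : ℝ × (Fin n → ℝ) × 𝒞, (0:ℝ) ∂Q by simp]
      refine integral_congr_ae ?_
      filter_upwards [hWzero] with z hz
      simp [hz]
end

section
/- (Identification of reduced counterfactual mean via reweighted adjustment.) Suppose consistency ($Y = Y(A)$ on the event $A=a$), conditional ignorability ($\{Y(a)\}\perp A \mid C$ for all $a$), positivity ($p(a\mid c)>0$), and the compositional structure $Y(a) = Y(g(a))$ for a measurable $g$ with $E[Y(a)] = E[Y(g(a))]$. Then $E[Y(g(a))] = \int E[Y \mid A=a, C=c]\,p(c)\,dc$, i.e., the identifying functional for the reduced counterfactual mean is the adjustment formula evaluated at any $a'$ with $g(a') = g(a)$, and in particular $E[Y(a)] = E[Y(a')]$ whenever $g(a) = g(a')$. -/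
open MeasureTheory ProbabilityTheory

lemma aux_generateFrom_singletons (𝒜 : Type*) [MeasurableSpace 𝒜]
    [MeasurableSingletonClass 𝒜] [Countable 𝒜] :
    (inferInstance : MeasurableSpace 𝒜)
      = MeasurableSpace.generateFrom (⋃ b : 𝒜, {({b} : Set 𝒜)}) := by
  refine le_antisymm (fun s _ => ?_) (MeasurableSpace.generateFrom_le ?_)
  · have hs : s = ⋃ b ∈ s, {b} := (Set.biUnion_of_singleton s).symm
    rw [hs]
    exact MeasurableSet.biUnion s.to_countable
      (fun b _ => MeasurableSpace.measurableSet_generateFrom (Set.mem_iUnion.2 ⟨b, rfl⟩))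
  · rintro t ht
    simp only [Set.mem_iUnion, Set.mem_singleton_iff] at ht
    obtain ⟨b, rfl⟩ := ht
    exact measurableSet_singleton b

lemma aux_ae_indepFun {Ω 𝒜 : Type*} {m : MeasurableSpace Ω}
    [mΩ : MeasurableSpace Ω] [StandardBorelSpace Ω]
    [MeasurableSpace 𝒜] [MeasurableSingletonClass 𝒜] [Countable 𝒜]
    (hm : m ≤ mΩ)
    (μ : Measure Ω) [IsProbabilityMeasure μ]
    {f : Ω → ℝ} (hf : Measurable f) {A : Ω → 𝒜} (hA : Measurable A)
    (h : ProbabilityTheory.Kernel.IndepFun f A (condExpKernel μ m) (μ.trim hm)) :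
    ∀ᵐ ω ∂μ, IndepFun f A (condExpKernel μ m ω) := by
  have hsets : ∀ p : ℚ × 𝒜, ∀ᵐ ω ∂μ,
      condExpKernel μ m ω (f ⁻¹' Set.Iic (p.1 : ℝ) ∩ A ⁻¹' {p.2})
        = condExpKernel μ m ω (f ⁻¹' Set.Iic (p.1 : ℝ)) * condExpKernel μ m ω (A ⁻¹' {p.2}) :=
    fun p => ae_of_ae_trim hm (h _ _ ⟨Set.Iic (p.1 : ℝ), measurableSet_Iic, rfl⟩
      ⟨{p.2}, measurableSet_singleton _, rfl⟩)
  rw [← ae_all_iff] at hsets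
  filter_upwards [hsets] with ω hω
  have hgen1 : MeasurableSpace.comap f inferInstance
      = MeasurableSpace.generateFrom ((fun s => f ⁻¹' s) '' (⋃ q : ℚ, {Set.Iic (q : ℝ)})) := by
    conv_lhs => rw [(BorelSpace.measurable_eq (α := ℝ)).trans Real.borel_eq_generateFrom_Iic_rat]
    exact MeasurableSpace.comap_generateFrom
  have hgen2 : MeasurableSpace.comap A inferInstance
      = MeasurableSpace.generateFrom ((fun s => A ⁻¹' s) '' (⋃ b : 𝒜, {({b} : Set 𝒜)})) := by
    conv_lhs => rw [aux_generateFrom_singletons 𝒜]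
    exact MeasurableSpace.comap_generateFrom
  have hpi2 : IsPiSystem (⋃ b : 𝒜, {({b} : Set 𝒜)}) := by
    rintro s hs t ht hst
    simp only [Set.mem_iUnion, Set.mem_singleton_iff] at hs ht ⊢
    obtain ⟨b, rfl⟩ := hs
    obtain ⟨c, rfl⟩ := ht
    obtain ⟨x, hxb, hxc⟩ := hst
    simp only [Set.mem_singleton_iff] at hxb hxc
    subst hxb
    subst hxc
    exact ⟨x, by simp⟩
  have hyp : IndepSets ((fun s => f ⁻¹' s) '' (⋃ q : ℚ, {Set.Iic (q : ℝ)}))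
      ((fun s => A ⁻¹' s) '' (⋃ b : 𝒜, {({b} : Set 𝒜)})) (condExpKernel μ m ω) := by
    rintro t1 t2 ⟨s1, hs1, rfl⟩ ⟨s2, hs2, rfl⟩
    simp only [Set.mem_iUnion, Set.mem_singleton_iff] at hs1 hs2
    obtain ⟨q, rfl⟩ := hs1
    obtain ⟨b, rfl⟩ := hs2
    exact ae_of_all _ (fun _ => hω (q, b))
  exact IndepSets.indep hf.comap_le hA.comap_le (Real.isPiSystem_Iic_rat.comap f)
    (hpi2.comap A) hgen1 hgen2 hyp

lemma aux_mul_indicator_one {α : Type*} (s : Set α) (f : α → ℝ) :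
    f * s.indicator (fun _ => (1 : ℝ)) = s.indicator f := by
  funext x; by_cases h : x ∈ s <;> simp [h]

lemma aux_indicator_one_mul {α : Type*} (s : Set α) (f : α → ℝ) :
    s.indicator (fun _ => (1 : ℝ)) * f = s.indicator f := by
  funext x; by_cases h : x ∈ s <;> simp [h]

lemma aux_main {Ω 𝒜 : Type*} {m mac : MeasurableSpace Ω}
    [mΩ : MeasurableSpace Ω] [StandardBorelSpace Ω]
    [MeasurableSpace 𝒜] [MeasurableSingletonClass 𝒜] [Countable 𝒜]
    (hm : m ≤ mΩ) (hmac : mac ≤ mΩ) (hm_le_mac : m ≤ mac)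
    (μ : Measure Ω) [IsProbabilityMeasure μ]
    {A : Ω → 𝒜} (hA : Measurable A)
    {Y f G G' : Ω → ℝ} (hYint : Integrable Y μ)
    (hf : Measurable f) (hfint : Integrable f μ)
    (hGint : Integrable G μ) (hG'ver : G' =ᵐ[μ] μ[Y|mac])
    (a : 𝒜)
    (hGG' : ∀ ω, A ω = a → G' ω = G ω)
    (hcons : ∀ᵐ ω ∂μ, A ω = a → Y ω = f ω)
    (hign : ProbabilityTheory.Kernel.IndepFun f A (condExpKernel μ m) (μ.trim hm))
    (hemac : MeasurableSet[mac] (A ⁻¹' {a}))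
    (hG_sm : StronglyMeasurable[m] G)
    (hpos : ∀ᵐ ω ∂μ, 0 < (μ[(A ⁻¹' {a}).indicator (fun _ => (1 : ℝ))|m]) ω) :
    ∫ ω, f ω ∂μ = ∫ ω, G ω ∂μ := by
  classical
  set e : Ω → ℝ := (A ⁻¹' {a}).indicator (fun _ => (1 : ℝ)) with hedef
  have hAa : MeasurableSet (A ⁻¹' {a}) := hA (measurableSet_singleton a)
  have he_int : Integrable e μ := by rw [hedef]; exact (integrable_const (1 : ℝ)).indicator hAa
  have hfe_int : Integrable (f * e) μ := by
    rw [hedef, aux_mul_indicator_one]; exact hfint.indicator hAa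
  have heY_int : Integrable (e * Y) μ := by
    rw [hedef, aux_indicator_one_mul]; exact hYint.indicator hAa
  have hge_int : Integrable (G * e) μ := by
    rw [hedef, aux_mul_indicator_one]; exact hGint.indicator hAa
  -- a.e. independence under the conditional kernel
  have hind : ∀ᵐ ω ∂μ, IndepFun f A (condExpKernel μ m ω) :=
    aux_ae_indepFun hm μ hf hA hign
  have hint_f : ∀ᵐ ω ∂μ, Integrable f (condExpKernel μ m ω) :=
    hfint.condExpKernel_ae (m := m)
  have hk1 : μ[f * e|m] =ᵐ[μ] fun ω => ∫ y, (f * e) y ∂(condExpKernel μ m ω) :=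
    condExp_ae_eq_integral_condExpKernel hm hfe_int
  have hk2 : μ[f|m] =ᵐ[μ] fun ω => ∫ y, f y ∂(condExpKernel μ m ω) :=
    condExp_ae_eq_integral_condExpKernel hm hfint
  have hk3 : μ[e|m] =ᵐ[μ] fun ω => ∫ y, e y ∂(condExpKernel μ m ω) :=
    condExp_ae_eq_integral_condExpKernel hm he_int
  have hφ : Measurable (Set.indicator ({a} : Set 𝒜) (fun _ => (1 : ℝ))) :=
    measurable_of_countable _
  have he_comp : e = (Set.indicator ({a} : Set 𝒜) (fun _ => (1 : ℝ))) ∘ A := by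
    rw [hedef]; funext x
    by_cases h : A x = a <;> simp [Set.indicator_apply, h]
  -- the product rule for the conditional expectation
  have hstar : μ[f * e|m] =ᵐ[μ] μ[f|m] * μ[e|m] := by
    filter_upwards [hk1, hk2, hk3, hind, hint_f] with ω h1 h2 h3 hiω hfi
    rw [h1, Pi.mul_apply, h2, h3]
    have hiω' : IndepFun f e (condExpKernel μ m ω) := by
      rw [he_comp]; exact hiω.comp measurable_id hφ
    have he_i : Integrable e (condExpKernel μ m ω) := by
      rw [he_comp]
      refine Integrable.mono' (integrable_const (1 : ℝ))
        ((hφ.comp hA).aestronglyMeasurable) (ae_of_all _ fun x => ?_)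
      by_cases h : A x ∈ ({a} : Set 𝒜) <;> simp only [Function.comp_apply, Set.indicator_apply, h, if_true, if_false] <;> norm_num
    exact hiω'.integral_mul_eq_mul_integral hfi.aestronglyMeasurable he_i.aestronglyMeasurable
  -- consistency
  have hcons' : f * e =ᵐ[μ] Y * e := by
    filter_upwards [hcons] with ω hc
    by_cases h : A ω = a
    · simp only [Pi.mul_apply]; rw [hc h]
    · have h0 : e ω = 0 := by rw [hedef]; simp [Set.indicator_apply, h]
      simp only [Pi.mul_apply, h0, mul_zero]
  -- pull-out at the finer level
  have he_sm_mac : StronglyMeasurable[mac] e := by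
    rw [hedef]; exact stronglyMeasurable_const.indicator hemac
  have h2 : μ[Y * e|mac] =ᵐ[μ] e * μ[Y|mac] := by
    have hcomm : Y * e = e * Y := mul_comm Y e
    rw [hcomm]
    exact condExp_mul_of_stronglyMeasurable_left he_sm_mac heY_int hYint
  have h3 : e * μ[Y|mac] =ᵐ[μ] e * G := by
    filter_upwards [hG'ver] with ω hg1
    simp only [Pi.mul_apply]
    by_cases h : A ω = a
    · rw [← hg1, hGG' ω h]
    · have h0 : e ω = 0 := by rw [hedef]; simp [Set.indicator_apply, h]
      simp only [h0, zero_mul]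
  have h4 : μ[Y * e|m] =ᵐ[μ] μ[G * e|m] := by
    have t1 : μ[Y * e|m] =ᵐ[μ] μ[μ[Y * e|mac]|m] := (condExp_condExp_of_le hm_le_mac hmac).symm
    have t2 : μ[μ[Y * e|mac]|m] =ᵐ[μ] μ[G * e|m] := by
      have heq : μ[Y * e|mac] =ᵐ[μ] G * e := by
        refine (h2.trans h3).trans ?_
        rw [mul_comm]
      exact condExp_congr_ae heq
    exact t1.trans t2
  have h5 : μ[G * e|m] =ᵐ[μ] G * μ[e|m] :=
    condExp_mul_of_stronglyMeasurable_left hG_sm hge_int he_int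
  have key : μ[f|m] * μ[e|m] =ᵐ[μ] G * μ[e|m] :=
    hstar.symm.trans ((condExp_congr_ae hcons').trans (h4.trans h5))
  have hfinal : μ[f|m] =ᵐ[μ] G := by
    filter_upwards [key, hpos] with ω h hp
    simp only [Pi.mul_apply] at h
    exact mul_right_cancel₀ (ne_of_gt hp) h
  calc ∫ ω, f ω ∂μ = ∫ ω, (μ[f|m]) ω ∂μ := (integral_condExp hm).symm
    _ = ∫ ω, G ω ∂μ := integral_congr_ae hfinal


/-- Identification of the reduced counterfactual mean via reweighted adjustment
(Corollary 1): under consistency, conditional ignorability, positivity, and the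
compositional structure `Y(b) = Y(g(b))` (here: `Ypo b = Ypog (g b)` a.s.), the mean of the
reduced counterfactual `Y(g(a))` is identified by the adjustment formula
`E[Y(g(a))] = E[E[Y ∣ A = a, C]]`, and `E[Y(a)] = E[Y(a')]` whenever `g(a) = g(a')`. -/
theorem reduced_counterfactual_identification
    {Ω 𝒜 𝒟 𝒞 : Type*} [MeasurableSpace Ω] [StandardBorelSpace Ω]
    [MeasurableSpace 𝒜] [MeasurableSingletonClass 𝒜] [Countable 𝒜]
    [MeasurableSpace 𝒟] [MeasurableSpace 𝒞]
    (μ : Measure Ω) [IsProbabilityMeasure μ]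
    (A : Ω → 𝒜) (hA : Measurable A) (C : Ω → 𝒞) (hC : Measurable C)
    (Y : Ω → ℝ) (hYmeas : Measurable Y) (hYint : Integrable Y μ)
    (Ypo : 𝒜 → Ω → ℝ) (hYpo : ∀ b, Measurable (Ypo b)) (hYpoint : ∀ b, Integrable (Ypo b) μ)
    -- the dimension reduction map and the compositional counterfactuals
    (g : 𝒜 → 𝒟) (hg : Measurable g)
    (Ypog : 𝒟 → Ω → ℝ) (hYpog : ∀ t, Measurable (Ypog t))
    (hcomp : ∀ b, Ypo b =ᵐ[μ] Ypog (g b))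
    -- consistency
    (hcons : ∀ᵐ ω ∂μ, Y ω = Ypo (A ω) ω)
    -- conditional ignorability: `Y(b) ⟂ A ∣ C` for each `b`
    (hign : ∀ b, CondIndepFun (MeasurableSpace.comap C inferInstance) hC.comap_le
        (Ypo b) A μ)
    (a : 𝒜)
    -- positivity: `P(A = a ∣ C) > 0` a.s.
    (hpos : ∀ᵐ ω ∂μ, 0 < (μ[(A ⁻¹' {a}).indicator (fun _ => (1 : ℝ)) |
        MeasurableSpace.comap C inferInstance]) ω)
    -- `ghat` is a version of `E[Y ∣ A, C]` as a function of `(A, C)`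
    (ghat : 𝒜 → 𝒞 → ℝ) (hghat : Measurable (Function.uncurry ghat))
    (hghatver : (fun ω => ghat (A ω) (C ω)) =ᵐ[μ]
        μ[Y | MeasurableSpace.comap (fun ω => (A ω, C ω)) inferInstance])
    (hghatint : Integrable (fun ω => ghat a (C ω)) μ) :
    (∫ ω, Ypog (g a) ω ∂μ = ∫ ω, ghat a (C ω) ∂μ)
    ∧ ∀ a' : 𝒜, g a' = g a → ∫ ω, Ypo a ω ∂μ = ∫ ω, Ypo a' ω ∂μ := by
  classical
  have part2 : ∀ a' : 𝒜, g a' = g a → ∫ ω, Ypo a ω ∂μ = ∫ ω, Ypo a' ω ∂μ := by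
    intro a' ha'
    calc ∫ ω, Ypo a ω ∂μ = ∫ ω, Ypog (g a) ω ∂μ := integral_congr_ae (hcomp a)
      _ = ∫ ω, Ypog (g a') ω ∂μ := by rw [ha']
      _ = ∫ ω, Ypo a' ω ∂μ := (integral_congr_ae (hcomp a')).symm
  refine ⟨?_, part2⟩
  have h1 : ∫ ω, Ypog (g a) ω ∂μ = ∫ ω, Ypo a ω ∂μ := integral_congr_ae (hcomp a).symm
  rw [h1]
  have hm_le_mac : MeasurableSpace.comap C inferInstance
      ≤ MeasurableSpace.comap (fun ω => (A ω, C ω)) inferInstance := by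
    have hCeq : C = Prod.snd ∘ (fun ω => (A ω, C ω)) := rfl
    rw [hCeq, ← MeasurableSpace.comap_comp]
    exact MeasurableSpace.comap_mono measurable_snd.comap_le
  have hcons' : ∀ᵐ ω ∂μ, A ω = a → Y ω = Ypo a ω := by
    filter_upwards [hcons] with ω h h'
    rw [h, h']
  have hemac : MeasurableSet[MeasurableSpace.comap (fun ω => (A ω, C ω)) inferInstance]
      (A ⁻¹' {a}) :=
    ⟨({a} : Set 𝒜) ×ˢ (Set.univ : Set 𝒞),
      (measurableSet_singleton a).prod MeasurableSet.univ, by ext ω; simp [eq_comm]⟩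
  have hG_sm : StronglyMeasurable[MeasurableSpace.comap C inferInstance]
      (fun ω => ghat a (C ω)) := by
    have hga : Measurable (fun c => ghat a c) := hghat.comp measurable_prodMk_left
    have hCm : @Measurable Ω 𝒞 (MeasurableSpace.comap C inferInstance) _ C :=
      fun s hs => ⟨s, hs, rfl⟩
    exact (hga.comp hCm).stronglyMeasurable
  exact aux_main hC.comap_le (hA.prodMk hC).comap_le hm_le_mac μ hA hYint
    (hYpo a) (hYpoint a) hghatint hghatver a (fun ω h => by rw [h])
    hcons' (hign a) hemac hG_sm hpos
end

section
/- (MSM estimating equation consistency.) Suppose $E[Y(a)] = f(a;\beta_0)$ for all $a$ (a correctly specified marginal structural model), and the identification $E[Y(a)] = E[E[Y\mid A=a, C]]$ holds with positivity. Let $p^*(a)$ be a bounded density in $a$ and define the weight $W(a, C) = p(a \mid C)$. Then for discrete $A$: $E\left[\frac{p^*(A)\,\{Y - f(A;\beta_0)\}}{p(A\mid C)}\right] = \sum_a p^*(a)\,\{E[Y(a)] - f(a;\beta_0)\} = 0$. -/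
open MeasureTheory ProbabilityTheory
open scoped Classical

/-- Under conditional independence of `W` and `A` given `C`, the conditional probability of
`{A = b}` given `σ(C) ⊔ σ(W)` agrees with that given `σ(C)`. -/
lemma aux_condexp_sup
    {Ω 𝒜 𝒞 : Type*} [MeasurableSpace Ω] [StandardBorelSpace Ω]
    [MeasurableSpace 𝒜] [MeasurableSingletonClass 𝒜] [MeasurableSpace 𝒞]
    (μ : Measure Ω) [IsProbabilityMeasure μ]
    (A : Ω → 𝒜) (hA : Measurable A) (C : Ω → 𝒞) (hC : Measurable C)
    (W : Ω → ℝ) (hW : Measurable W)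
    (hign : CondIndepFun (MeasurableSpace.comap C inferInstance) hC.comap_le W A μ)
    (b : 𝒜) :
    μ[(A ⁻¹' {b}).indicator (fun _ => (1:ℝ)) | MeasurableSpace.comap C inferInstance]
      =ᵐ[μ] μ[(A ⁻¹' {b}).indicator (fun _ => (1:ℝ)) |
          MeasurableSpace.comap C inferInstance ⊔ MeasurableSpace.comap W inferInstance] := by
  have hm' : MeasurableSpace.comap C inferInstance ≤ ‹MeasurableSpace Ω› := hC.comap_le
  have hm'' : MeasurableSpace.comap C inferInstance ⊔ MeasurableSpace.comap W inferInstance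
      ≤ ‹MeasurableSpace Ω› := sup_le hC.comap_le hW.comap_le
  set D : Set Ω := A ⁻¹' {b} with hDdef
  have hD : MeasurableSet D := hA (measurableSet_singleton b)
  set I : Ω → ℝ := D.indicator (fun _ => (1:ℝ)) with hIdef
  have hIint : Integrable I μ := (integrable_const (1:ℝ)).indicator hD
  set pafm : Ω → ℝ := μ[I | MeasurableSpace.comap C inferInstance] with hpafmdef
  have hpafm_sm : StronglyMeasurable[MeasurableSpace.comap C inferInstance] pafm := by
    rw [hpafmdef]; exact stronglyMeasurable_condExp
  have hpafm_int : Integrable pafm μ := by rw [hpafmdef]; exact integrable_condExp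
  -- the π-system generating the sup σ-algebra
  set S : Set (Set Ω) :=
    {s | ∃ c t, MeasurableSet[MeasurableSpace.comap C inferInstance] c ∧ MeasurableSet t ∧
      s = c ∩ W ⁻¹' t} with hSdef
  have hSsub : ∀ s ∈ S,
      MeasurableSet[MeasurableSpace.comap C inferInstance ⊔
        MeasurableSpace.comap W inferInstance] s := by
    rintro s ⟨c, t, hc, ht, rfl⟩
    exact (((le_sup_left :
      MeasurableSpace.comap C inferInstance ≤ MeasurableSpace.comap C inferInstance ⊔
        MeasurableSpace.comap W inferInstance)) _ hc).inter
      ((le_sup_right :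
        MeasurableSpace.comap W inferInstance ≤ MeasurableSpace.comap C inferInstance ⊔
          MeasurableSpace.comap W inferInstance) _ ⟨t, ht, rfl⟩)
  have h_eq : MeasurableSpace.comap C inferInstance ⊔ MeasurableSpace.comap W inferInstance
      = MeasurableSpace.generateFrom S := by
    refine le_antisymm (sup_le ?_ ?_) (MeasurableSpace.generateFrom_le hSsub)
    · intro c hc
      exact MeasurableSpace.measurableSet_generateFrom
        ⟨c, Set.univ, hc, MeasurableSet.univ, by simp⟩
    · rintro s ⟨t, ht, rfl⟩
      exact MeasurableSpace.measurableSet_generateFrom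
        ⟨Set.univ, t, MeasurableSet.univ, ht, by simp⟩
  have h_inter : IsPiSystem S := by
    rintro s ⟨c1, t1, hc1, ht1, rfl⟩ u ⟨c2, t2, hc2, ht2, rfl⟩ -
    exact ⟨c1 ∩ c2, t1 ∩ t2, hc1.inter hc2, ht1.inter ht2, by
      rw [Set.preimage_inter]; ac_rfl⟩
  -- basic case of the induction
  have h_basic : ∀ s ∈ S, ∫ x in s, pafm x ∂μ = ∫ x in s, I x ∂μ := by
    rintro s ⟨c, t, hc', ht, rfl⟩
    have hcΩ : MeasurableSet c := hm' _ hc'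
    set d : Set Ω := W ⁻¹' t with hddef
    have hd : MeasurableSet d := hW ht
    set J : Ω → ℝ := d.indicator (fun _ => (1:ℝ)) with hJdef
    have hJint : Integrable J μ := (integrable_const (1:ℝ)).indicator hd
    have hJsm : AEStronglyMeasurable J μ :=
      (measurable_const.indicator hd : Measurable J).aestronglyMeasurable
    have hpafmJ_int : Integrable (pafm * J) μ := by
      refine Integrable.mono' hpafm_int.norm
        ((hpafm_sm.mono hm').aestronglyMeasurable.mul hJsm) ?_
      filter_upwards with ω
      rw [Pi.mul_apply, norm_mul]
      have : ‖J ω‖ ≤ 1 := by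
        rw [hJdef]; by_cases h : ω ∈ d <;> simp [Set.indicator_apply, h]
      calc ‖pafm ω‖ * ‖J ω‖ ≤ ‖pafm ω‖ * 1 :=
            mul_le_mul_of_nonneg_left this (norm_nonneg _)
        _ = ‖pafm ω‖ := mul_one _
    -- conditional independence: condexp of the intersection indicator factors
    have hfact : μ[(d ∩ D).indicator (fun _ => (1:ℝ)) | MeasurableSpace.comap C inferInstance]
        =ᵐ[μ] fun ω => (μ[J | MeasurableSpace.comap C inferInstance]) ω * pafm ω := by
      have h := (condIndepFun_iff_condExp_inter_preimage_eq_mul hW hA).mp hign t {b} ht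
        (measurableSet_singleton b)
      exact h
    -- pull-out property
    have hpull : μ[pafm * J | MeasurableSpace.comap C inferInstance]
        =ᵐ[μ] pafm * μ[J | MeasurableSpace.comap C inferInstance] :=
      condExp_mul_of_stronglyMeasurable_left hpafm_sm hpafmJ_int hJint
    have hIdD_int : Integrable ((d ∩ D).indicator (fun _ => (1:ℝ))) μ :=
      (integrable_const (1:ℝ)).indicator (hd.inter hD)
    calc ∫ x in c ∩ d, pafm x ∂μ
        = ∫ x in c, d.indicator pafm x ∂μ := (setIntegral_indicator hd).symm
      _ = ∫ x in c, (pafm * J) x ∂μ := by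
          refine setIntegral_congr_ae hcΩ ?_
          filter_upwards with ω _
          rw [Pi.mul_apply, hJdef]
          by_cases h : ω ∈ d <;> simp [Set.indicator_apply, h]
      _ = ∫ x in c, (μ[pafm * J | MeasurableSpace.comap C inferInstance]) x ∂μ :=
          (setIntegral_condExp hm' hpafmJ_int hc').symm
      _ = ∫ x in c, (μ[(d ∩ D).indicator (fun _ => (1:ℝ)) |
            MeasurableSpace.comap C inferInstance]) x ∂μ := by
          refine setIntegral_congr_ae hcΩ ?_
          filter_upwards [hpull, hfact] with ω h1 h2 _
          rw [h1, h2, Pi.mul_apply, mul_comm]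
      _ = ∫ x in c, (d ∩ D).indicator (fun _ => (1:ℝ)) x ∂μ :=
          setIntegral_condExp hm' hIdD_int hc'
      _ = ∫ x in c, d.indicator I x ∂μ := by
          refine setIntegral_congr_ae hcΩ ?_
          filter_upwards with ω _
          rw [hIdef, Set.indicator_indicator]
      _ = ∫ x in c ∩ d, I x ∂μ := setIntegral_indicator hd
  -- integrals agree on all of the sup σ-algebra
  have h_all : ∀ s, MeasurableSet[MeasurableSpace.comap C inferInstance ⊔
      MeasurableSpace.comap W inferInstance] s →
      ∫ x in s, pafm x ∂μ = ∫ x in s, I x ∂μ := by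
    intro s hs
    refine MeasurableSpace.induction_on_inter
      (m := MeasurableSpace.comap C inferInstance ⊔ MeasurableSpace.comap W inferInstance)
      (C := fun s _ => ∫ x in s, pafm x ∂μ = ∫ x in s, I x ∂μ)
      h_eq h_inter ?_ (fun t ht => h_basic t ht) ?_ ?_ s hs
    · simp
    · intro u hu hCu
      have huΩ : MeasurableSet u := hm'' _ hu
      have h1 := integral_add_compl huΩ hpafm_int
      have h2 := integral_add_compl huΩ hIint
      have htot : ∫ x, pafm x ∂μ = ∫ x, I x ∂μ := by
        rw [hpafmdef]; exact integral_condExp hm'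
      linarith
    · intro g hgdisj hgm hCg
      have hgΩ : ∀ i, MeasurableSet (g i) := fun i => hm'' _ (hgm i)
      rw [integral_iUnion hgΩ hgdisj hpafm_int.integrableOn,
        integral_iUnion hgΩ hgdisj hIint.integrableOn]
      exact tsum_congr hCg
  -- conclude via the characterization of condexp
  exact ae_eq_condExp_of_forall_setIntegral_eq hm'' hIint
    (fun s _ _ => hpafm_int.integrableOn) (fun s hs _ => h_all s hs)
    ⟨pafm, hpafm_sm.mono le_sup_left, Filter.EventuallyEq.rfl⟩

/-- MSM estimating equation consistency: if `E[Y(a)] = f(a)` for all `a` (a correctly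
specified marginal structural model), under consistency, conditional ignorability, and
positivity, for discrete `A` and a bounded density `p*`:
`E[p*(A){Y - f(A)}/p(A∣C)] = ∑_a p*(a){E[Y(a)] - f(a)} = 0`. -/
theorem msm_estimating_equation_consistency
    {Ω 𝒜 𝒞 : Type*} [MeasurableSpace Ω] [StandardBorelSpace Ω]
    [MeasurableSpace 𝒜] [MeasurableSingletonClass 𝒜] [Countable 𝒜] [MeasurableSpace 𝒞]
    (μ : Measure Ω) [IsProbabilityMeasure μ]
    (A : Ω → 𝒜) (hA : Measurable A) (C : Ω → 𝒞) (hC : Measurable C)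
    (Y : Ω → ℝ) (hYmeas : Measurable Y) (hYint : Integrable Y μ)
    (Ypo : 𝒜 → Ω → ℝ) (hYpo : ∀ b, Measurable (Ypo b)) (hYpoint : ∀ b, Integrable (Ypo b) μ)
    -- consistency
    (hcons : ∀ᵐ ω ∂μ, Y ω = Ypo (A ω) ω)
    -- conditional ignorability: `Y(b) ⟂ A ∣ C` for each `b`
    (hign : ∀ b, CondIndepFun (MeasurableSpace.comap C inferInstance) hC.comap_le
        (Ypo b) A μ)
    -- `paf b` is a version of the conditional probability `P(A = b ∣ C)`
    (paf : 𝒜 → Ω → ℝ) (hpafmeas : ∀ b, Measurable (paf b))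
    (hpafver : ∀ b, paf b =ᵐ[μ] μ[(A ⁻¹' {b}).indicator (fun _ => (1 : ℝ)) |
        MeasurableSpace.comap C inferInstance])
    -- positivity: `P(A = b ∣ C) ≥ ε > 0` for all `b`
    (ε : ℝ) (hε : 0 < ε) (hpos : ∀ b, ∀ᵐ ω ∂μ, ε ≤ paf b ω)
    -- a correctly specified marginal structural model: `E[Y(b)] = f(b)` for all `b`
    (f : 𝒜 → ℝ) (hMSM : ∀ b, ∫ ω, Ypo b ω ∂μ = f b)
    -- `p*` is a bounded density on `𝒜`
    (ps : 𝒜 → ℝ) (hpsnn : ∀ b, 0 ≤ ps b) (Cps : ℝ) (hpsb : ∀ b, ps b ≤ Cps)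
    (hps1 : ∑' b, ps b = 1)
    (hInt : Integrable (fun ω => ps (A ω) * (Y ω - f (A ω)) / paf (A ω) ω) μ) :
    (∫ ω, ps (A ω) * (Y ω - f (A ω)) / paf (A ω) ω ∂μ
        = ∑' b, ps b * ((∫ ω, Ypo b ω ∂μ) - f b))
    ∧ (∑' b, ps b * ((∫ ω, Ypo b ω ∂μ) - f b)) = 0 := by
  have hm' : MeasurableSpace.comap C inferInstance ≤ ‹MeasurableSpace Ω› := hC.comap_le
  -- the per-stratum integrals vanish
  have hTb : ∀ b, ∫ ω in A ⁻¹' {b}, ps (A ω) * (Y ω - f (A ω)) / paf (A ω) ω ∂μ = 0 := by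
    intro b
    have hD : MeasurableSet (A ⁻¹' {b}) := hA (measurableSet_singleton b)
    set I : Ω → ℝ := (A ⁻¹' {b}).indicator (fun _ => (1:ℝ)) with hIdef
    have hIint : Integrable I μ := (integrable_const (1:ℝ)).indicator hD
    have hm'' : MeasurableSpace.comap C inferInstance ⊔ MeasurableSpace.comap (Ypo b) inferInstance
        ≤ ‹MeasurableSpace Ω› := sup_le hC.comap_le (hYpo b).comap_le
    set pafm : Ω → ℝ := μ[I | MeasurableSpace.comap C inferInstance] with hpafmdef
    have hpafm_sm : StronglyMeasurable[MeasurableSpace.comap C inferInstance] pafm := by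
      rw [hpafmdef]; exact stronglyMeasurable_condExp
    have hver : paf b =ᵐ[μ] pafm := hpafver b
    have hA2 : paf b =ᵐ[μ] μ[I | MeasurableSpace.comap C inferInstance ⊔
        MeasurableSpace.comap (Ypo b) inferInstance] :=
      hver.trans (by rw [hpafmdef]; exact aux_condexp_sup μ A hA C hC (Ypo b) (hYpo b) (hign b) b)
    set G : Ω → ℝ := fun ω => (Ypo b ω - f b) / pafm ω with hGdef
    have hGsm : StronglyMeasurable[MeasurableSpace.comap C inferInstance ⊔
        MeasurableSpace.comap (Ypo b) inferInstance] G := by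
      have hWm : Measurable[MeasurableSpace.comap C inferInstance ⊔
          MeasurableSpace.comap (Ypo b) inferInstance] (Ypo b) :=
        (measurable_iff_comap_le.mpr le_rfl).mono le_sup_right le_rfl
      rw [hGdef]
      exact ((hWm.sub measurable_const).div ((hpafm_sm.mono le_sup_left).measurable)).stronglyMeasurable
    have hGI_int : Integrable (fun ω => G ω * I ω) μ := by
      refine Integrable.mono' (((hYpoint b).norm.add (integrable_const ‖f b‖)).div_const ε)
        (((hGsm.mono hm'').aestronglyMeasurable).mul
          ((measurable_const.indicator hD : Measurable I)).aestronglyMeasurable) ?_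
      filter_upwards [hpos b, hver] with ω hp he
      have hpafm_pos : 0 < pafm ω := lt_of_lt_of_le hε (he ▸ hp)
      have hI1 : ‖I ω‖ ≤ 1 := by
        rw [hIdef]; by_cases h : ω ∈ A ⁻¹' {b} <;> simp [Set.indicator_apply, h]
      have hG : ‖G ω‖ ≤ (‖Ypo b ω‖ + ‖f b‖) / ε := by
        rw [hGdef]
        simp only [norm_div]
        rw [Real.norm_of_nonneg hpafm_pos.le]
        exact div_le_div₀ (by positivity) (norm_sub_le _ _) hε (he ▸ hp)
      calc ‖G ω * I ω‖ = ‖G ω‖ * ‖I ω‖ := norm_mul _ _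
        _ ≤ ((‖Ypo b ω‖ + ‖f b‖) / ε) * 1 :=
            mul_le_mul hG hI1 (norm_nonneg _) (by positivity)
        _ = (‖Ypo b ω‖ + ‖f b‖) / ε := mul_one _
    have key : (∫ ω, G ω * I ω ∂μ) = 0 := by
      have step1 : (∫ ω, G ω * I ω ∂μ)
          = ∫ ω, (μ[(fun ω => G ω * I ω) | MeasurableSpace.comap C inferInstance ⊔
              MeasurableSpace.comap (Ypo b) inferInstance]) ω ∂μ :=
        (integral_condExp hm'').symm
      have step2 : μ[(fun ω => G ω * I ω) | MeasurableSpace.comap C inferInstance ⊔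
              MeasurableSpace.comap (Ypo b) inferInstance]
          =ᵐ[μ] fun ω => G ω * (μ[I | MeasurableSpace.comap C inferInstance ⊔
              MeasurableSpace.comap (Ypo b) inferInstance]) ω := by
        have := condExp_mul_of_stronglyMeasurable_left hGsm
          (by exact hGI_int) hIint
        exact this
      rw [step1, integral_congr_ae step2]
      have step3 : (fun ω => G ω * (μ[I | MeasurableSpace.comap C inferInstance ⊔
              MeasurableSpace.comap (Ypo b) inferInstance]) ω)
          =ᵐ[μ] fun ω => Ypo b ω - f b := by
        filter_upwards [hA2, hpos b, hver] with ω h2 hp he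
        rw [← h2, hGdef]
        have hne : paf b ω ≠ 0 := (lt_of_lt_of_le hε hp).ne'
        simp only []
        rw [← he, div_mul_cancel₀ _ hne]
      rw [integral_congr_ae step3, integral_sub (hYpoint b) (integrable_const _),
        integral_const, probReal_univ, one_smul, hMSM b, sub_self]
    have h1 : ∫ ω in A ⁻¹' {b}, ps (A ω) * (Y ω - f (A ω)) / paf (A ω) ω ∂μ
        = ∫ ω in A ⁻¹' {b}, ps b * ((Ypo b ω - f b) / paf b ω) ∂μ := by
      refine setIntegral_congr_ae hD ?_
      filter_upwards [hcons] with ω hY hmem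
      have hab : A ω = b := hmem
      rw [hY, hab, mul_div_assoc]
    have h2 : ∫ ω in A ⁻¹' {b}, (Ypo b ω - f b) / paf b ω ∂μ = ∫ ω, G ω * I ω ∂μ := by
      rw [← integral_indicator hD]
      refine integral_congr_ae ?_
      filter_upwards [hver] with ω he
      rw [hGdef, hIdef]
      by_cases h : ω ∈ A ⁻¹' {b}
      · simp [Set.indicator_of_mem h, he]
      · simp [Set.indicator_of_notMem h]
    rw [h1, integral_const_mul, h2, key, mul_zero]
  -- disjoint decomposition of the integral
  have hdisj : Pairwise (Function.onFun Disjoint fun b : 𝒜 => A ⁻¹' {b}) := by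
    intro b c hbc
    simp only [Function.onFun]
    rw [Set.disjoint_left]
    intro ω h1 h2
    have e1 : A ω = b := h1
    have e2 : A ω = c := h2
    exact hbc (e1.symm.trans e2)
  have hUnion : (⋃ b : 𝒜, A ⁻¹' {b}) = Set.univ := by
    ext ω; simp
  have hR : (∑' b, ps b * ((∫ ω, Ypo b ω ∂μ) - f b)) = 0 := by
    have : ∀ b, ps b * ((∫ ω, Ypo b ω ∂μ) - f b) = 0 := by
      intro b; rw [hMSM b, sub_self, mul_zero]
    simp only [this, tsum_zero]
  have hL : ∫ ω, ps (A ω) * (Y ω - f (A ω)) / paf (A ω) ω ∂μ = 0 := by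
    rw [← setIntegral_univ, ← hUnion,
      integral_iUnion (fun b => hA (measurableSet_singleton b)) hdisj hInt.integrableOn]
    simp only [hTb, tsum_zero]
  exact ⟨hL.trans hR.symm, hR⟩
end
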